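/- arXiv:2306.09033 — 4 statements merged into one kernel-verified Lean document; each statement's English description precedes it below -/
import Mathlib

section
/- Let p be a prime and k ≥ 1 an integer. Then f(Z_p^k) ≥ (p−1)k. Concretely, there is a complete digraph Γ on (p−1)k vertices and a weighting w : E(Γ) → Z_p^k such that Γ contains no directed cycle whose edge weights sum to zero: partition V(Γ) into k sets V_1, …, V_k each of size p−1 and weight every directed edge leaving a vertex of V_i by the i-th elementary basis vector e_i of Z_p^k. -/
/-- The weight of a walk along the list of vertices `l`, with respect to the
edge-weighting `w` of a complete digraph on vertex set `V`. -/
def pathWeight {V A : Type*} [AddCommGroup A] (w : V → V → A) (l : List V) : A :=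
  (List.zipWith w l l.tail).sum

/-- A complete digraph (all ordered pairs of distinct vertices being directed edges)
with edge-weighting `w` has a zero-sum directed cycle: there is a list of at
least two distinct vertices such that the weights of the consecutive directed
edges traversed cyclically sum to zero. -/
def HasZeroSumCycle {V A : Type*} [AddCommGroup A] (w : V → V → A) : Prop :=
  ∃ (a : V) (l : List V), l ≠ [] ∧ (a :: l).Nodup ∧ pathWeight w ((a :: l) ++ [a]) = 0

lemma pathWeight_const_right {V A : Type*} [AddCommGroup A] (f : V → A) (l : List V) :
    pathWeight (fun x _ => f x) l = (l.dropLast.map f).sum := by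
  induction l with
  | nil => rfl
  | cons x t ih =>
    cases t with
    | nil => rfl
    | cons y t' =>
      have : pathWeight (fun x _ => f x) (x :: y :: t') =
          f x + pathWeight (fun x _ => f x) (y :: t') := by
        simp [pathWeight]
      rw [this, ih]
      simp

lemma sum_map_ite_eq_countP {V R : Type*} [Semiring R] (c : V → Prop) [DecidablePred c]
    (l : List V) :
    (l.map fun v => if c v then (1:R) else 0).sum = (l.countP (fun v => decide (c v)) : R) := by
  induction l with
  | nil => simp
  | cons x t ih =>
    by_cases h : c x <;> simp [List.countP_cons, h, ih, add_comm]

/-- `f(ℤ_p^k) ≥ (p-1)k`: on the vertex set `Fin k × Fin (p-1)` (a complete digraph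
on `(p-1)·k` vertices, partitioned into the `k` parts `V_i = {i} × Fin (p-1)`, each
of size `p-1`), weighting every directed edge leaving a vertex of `V_i` by the
`i`-th elementary basis vector `e_i` of `ℤ_p^k` yields a weighting with no
zero-sum directed cycle. -/
theorem no_zero_sum_cycle_lower_bound (p k : ℕ) (hp : p.Prime) (hk : 1 ≤ k) :
    ¬ HasZeroSumCycle
      (fun (x _ : Fin k × Fin (p - 1)) => (Pi.single x.1 1 : Fin k → ZMod p)) := by
  rintro ⟨a, l, hne, hnd, hz⟩
  haveI : Fact p.Prime := ⟨hp⟩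
  set L : List (Fin k × Fin (p - 1)) := a :: l with hL
  set f : Fin k × Fin (p - 1) → Fin k → ZMod p := fun x => Pi.single x.1 1 with hf
  have h1 : pathWeight (fun x _ => f x) (L ++ [a]) = (L.map f).sum := by
    rw [pathWeight_const_right, List.dropLast_concat]
  rw [h1] at hz
  have h2 : (L.map (fun v => f v a.1)).sum = 0 := by
    have hmap := map_list_sum (Pi.evalAddMonoidHom (fun _ : Fin k => ZMod p) a.1) (L.map f)
    simp only [Pi.evalAddMonoidHom_apply, List.map_map, Function.comp_def] at hmap
    rw [← hmap, hz]
    rfl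
  have h3 : (L.map (fun v => f v a.1)) =
      L.map (fun v => if a.1 = v.1 then (1 : ZMod p) else 0) := by
    apply List.map_congr_left
    intro v _
    simp [hf, Pi.single_apply]
  rw [h3, sum_map_ite_eq_countP] at h2
  set n := L.countP (fun v => decide (a.1 = v.1)) with hn
  have hpos : 0 < n := by
    rw [hn, List.countP_pos_iff]
    exact ⟨a, by simp [hL], by simp⟩
  have hub : n ≤ p - 1 := by
    have hnodup : ((L.filter (fun v => decide (a.1 = v.1))).map Prod.snd).Nodup := by
      apply List.Nodup.map_on
      · intro x hx y hy hxy
        have hx' := List.of_mem_filter hx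
        have hy' := List.of_mem_filter hy
        simp only [decide_eq_true_eq] at hx' hy'
        exact Prod.ext (hx'.symm.trans hy') hxy
      · exact hnd.filter _
    have := hnodup.length_le_card
    rw [hn, List.countP_eq_length_filter]
    simpa using this
  have hdvd : p ∣ n := by
    rwa [ZMod.natCast_eq_zero_iff] at h2
  have := Nat.le_of_dvd hpos hdvd
  omega
end

section
/- Let A be a finite abelian group and let S be a reduced multiset with elements in A. Then every submultiset T ⊆ S is reduced. -/
/-!
Writing `S = T + U`, the sumset is additive: `Σ(T + U) = Σ(T) + Σ(U)`. So if deleting a copy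
of `t` from `T` did not shrink `Σ(T)`, deleting it from `S` would not shrink `Σ(S)` either.
-/

/-- The sumset `Σ(S)` of a multiset `S` with elements in an abelian group:
the set of all sums of submultisets of `S` (the empty sum being `0`). -/
def sumset {A : Type*} [AddCommGroup A] [DecidableEq A] (S : Multiset A) : Finset A :=
  (S.powerset.map Multiset.sum).toFinset

/-- A multiset `S` is reduced if removing one copy of any of its elements strictly
decreases the size of its sumset. -/
def IsReducedMultiset {A : Type*} [AddCommGroup A] [DecidableEq A] (S : Multiset A) : Prop :=
  ∀ s ∈ S, (sumset (S - {s})).card < (sumset S).card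

open Pointwise

section

variable {A : Type*} [AddCommGroup A] [DecidableEq A]

lemma mem_sumset {S : Multiset A} {a : A} : a ∈ sumset S ↔ ∃ R ≤ S, R.sum = a := by
  simp [sumset, Multiset.mem_powerset]

lemma sumset_mono {T S : Multiset A} (h : T ≤ S) : sumset T ⊆ sumset S := by
  intro a ha
  obtain ⟨R, hR, rfl⟩ := mem_sumset.1 ha
  exact mem_sumset.2 ⟨R, hR.trans h, rfl⟩

lemma sumset_add (T U : Multiset A) : sumset (T + U) = sumset T + sumset U := by
  ext a
  rw [Finset.mem_add, mem_sumset]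
  constructor
  · rintro ⟨R, hR, rfl⟩
    refine ⟨(R ∩ T).sum, mem_sumset.2 ⟨R ∩ T, Multiset.inter_le_right, rfl⟩,
      (R - T).sum, mem_sumset.2 ⟨R - T, ?_, rfl⟩, ?_⟩
    · rwa [Multiset.sub_le_iff_le_add, add_comm]
    · rw [← Multiset.sum_add, add_comm, Multiset.sub_add_inter]
  · rintro ⟨_, ha, _, hb, rfl⟩
    obtain ⟨R₁, hR₁, rfl⟩ := mem_sumset.1 ha
    obtain ⟨R₂, hR₂, rfl⟩ := mem_sumset.1 hb
    exact ⟨R₁ + R₂, add_le_add hR₁ hR₂, Multiset.sum_add _ _⟩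

lemma isReducedMultiset_iff {S : Multiset A} :
    IsReducedMultiset S ↔ ∀ s ∈ S, sumset (S - {s}) ≠ sumset S := by
  refine forall₂_congr fun s _ => ?_
  have hsub := sumset_mono (Multiset.sub_le_self S {s})
  exact ⟨fun h heq => h.ne (congrArg Finset.card heq),
    fun hne => Finset.card_lt_card (hsub.ssubset_of_ne hne)⟩

lemma sumset_add_sub_singleton_eq {T : Multiset A} {t : A} (ht : t ∈ T)
    (h : sumset (T - {t}) = sumset T) (U : Multiset A) :
    sumset (T + U - {t}) = sumset (T + U) := by
  rw [← tsub_add_eq_add_tsub (Multiset.singleton_le.2 ht), sumset_add, sumset_add, h]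

end

theorem reduced_of_le_reduced_general {A : Type*} [AddCommGroup A] [DecidableEq A]
    (S : Multiset A) (hS : IsReducedMultiset S) (T : Multiset A) (hT : T ≤ S) :
    IsReducedMultiset T := by
  rw [isReducedMultiset_iff] at hS ⊢
  intro t ht h
  obtain ⟨U, rfl⟩ := Multiset.le_iff_exists_add.1 hT
  exact hS t (Multiset.mem_add.2 (Or.inl ht)) (sumset_add_sub_singleton_eq ht h U)

/-- Every submultiset of a reduced multiset with elements in a finite abelian group
is reduced. -/
theorem reduced_of_le_reduced {A : Type*} [AddCommGroup A] [Fintype A] [DecidableEq A]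
    (S : Multiset A) (hS : IsReducedMultiset S) (T : Multiset A) (hT : T ≤ S) :
    IsReducedMultiset T :=
  reduced_of_le_reduced_general S hS T hT
end

section
/- Let Γ be a complete digraph, A an abelian group, and w : E(Γ) → A a weighting of the directed edges with no zero-sum directed cycle. Let v₀ be a vertex of Γ. Then there exists a weighting w' : E(Γ) → A such that: w'(v₀u) = 0 for every vertex u ≠ v₀; there are no zero-sum directed cycles with respect to w'; and every gadget g in Γ has the same value with respect to both w and w'. -/
/-- A gadget in a complete digraph on vertex set `V`, rooted at an ordered pair
`(u, v)` of distinct vertices: a pair of directed paths `P`, `Q` (lists of distinct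
vertices), each from `u` to `v`. -/
structure Gadget (V : Type*) where
  u : V
  v : V
  P : List V
  Q : List V
  hne : u ≠ v
  hPnodup : P.Nodup
  hQnodup : Q.Nodup
  hPhead : P.head? = some u
  hPlast : P.getLast? = some v
  hQhead : Q.head? = some u
  hQlast : Q.getLast? = some v

/-- The vertex set of a gadget: `V(g) = V(P) ∪ V(Q)`. -/
def Gadget.vertexSet {V : Type*} [DecidableEq V] (g : Gadget V) : Finset V :=
  g.P.toFinset ∪ g.Q.toFinset

/-- The value of a gadget: `g* = w(Q) - w(P)`. -/
def Gadget.value {V A : Type*} [AddCommGroup A] (w : V → V → A) (g : Gadget V) : A :=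
  pathWeight w g.Q - pathWeight w g.P

section Potential

variable {V A : Type*} [AddCommGroup A] (w : V → V → A) (f : V → A)

lemma pathWeight_add_sub_cons :
    ∀ (x : V) (l : List V), pathWeight (fun a b => w a b + f a - f b) (x :: l)
      = pathWeight w (x :: l) + f x - f ((x :: l).getLast (List.cons_ne_nil x l))
  | x, [] => by simp [pathWeight]
  | x, y :: t => by
    have ih := pathWeight_add_sub_cons y t
    simp only [pathWeight, List.tail_cons, List.zipWith_cons_cons, List.sum_cons] at ih ⊢
    rw [List.getLast_cons (List.cons_ne_nil _ _), ih]
    abel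

variable {w} in
lemma pathWeight_add_sub_of_head?_of_getLast? {l : List V} {x y : V}
    (hx : l.head? = some x) (hy : l.getLast? = some y) :
    pathWeight (fun a b => w a b + f a - f b) l = pathWeight w l + f x - f y := by
  cases l with
  | nil => simp at hx
  | cons z l =>
    obtain rfl : z = x := by simpa using hx
    rw [List.getLast?_eq_some_getLast (List.cons_ne_nil _ _), Option.some_inj] at hy
    rw [pathWeight_add_sub_cons, hy]

lemma Gadget.value_add_sub (g : Gadget V) :
    g.value (fun a b => w a b + f a - f b) = g.value w := by
  simp only [Gadget.value, pathWeight_add_sub_of_head?_of_getLast? f g.hQhead g.hQlast,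
    pathWeight_add_sub_of_head?_of_getLast? f g.hPhead g.hPlast]
  abel

lemma hasZeroSumCycle_add_sub_iff :
    HasZeroSumCycle (fun a b => w a b + f a - f b) ↔ HasZeroSumCycle w := by
  have closed (a : V) (l : List V) :
      pathWeight (fun a b => w a b + f a - f b) ((a :: l) ++ [a])
        = pathWeight w ((a :: l) ++ [a]) := by
    rw [pathWeight_add_sub_of_head?_of_getLast? f (x := a) (y := a) rfl List.getLast?_concat,
      add_sub_cancel_right]
  simp only [HasZeroSumCycle, closed]

end Potential

/-- If `w` is a weighting of a complete digraph `Γ` with no zero-sum directed cycle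
and `v₀` is a vertex, then there is a weighting `w'` such that all edges leaving
`v₀` have weight `0`, there are no zero-sum directed cycles with respect to `w'`,
and every gadget in `Γ` has the same value with respect to `w` and `w'`. -/
theorem exists_weighting_zero_at_vertex {V A : Type*} [AddCommGroup A]
    (w : V → V → A) (hw : ¬ HasZeroSumCycle w) (v₀ : V) :
    ∃ w' : V → V → A,
      (∀ u : V, u ≠ v₀ → w' v₀ u = 0) ∧
      ¬ HasZeroSumCycle w' ∧
      ∀ g : Gadget V, g.value w' = g.value w := by
  classical
  set f : V → A := Function.update (w v₀) v₀ 0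
  refine ⟨fun a b => w a b + f a - f b, fun u hu => ?_, ?_, Gadget.value_add_sub w f⟩
  · simp [f, hu]
  · rwa [hasZeroSumCycle_add_sub_iff]
end

section
/- Let p be a prime, k ≥ 1 an integer, and let v₁, …, v_{k(p−1)} be a sequence of k(p−1) vectors in Z_p^k, writing v_i = (v_i(1), …, v_i(k)). Suppose that ∑_{(I₁,…,I_k) ∈ 𝓘} ∏_{i∈[k]} ∏_{j∈I_i} v_j(i) ≠ 0 in Z_p, where 𝓘 is the collection of all partitions of the index set [k(p−1)] into k parts I₁, …, I_k each of size p−1. Then the sumset of the multiset {v₁, …, v_{k(p−1)}} equals all of Z_p^k, i.e., every element of Z_p^k is a sum of some subset of the v_i's. -/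
/-!
With `n = k(p-1)` variables, let `P = ∏ᵢ (1 - (∑ⱼ vⱼ(i) Xⱼ - xᵢ)^(p-1))`. By Fermat's little
theorem, `P` is nonzero at the indicator vector of `J` only if `∑_{j ∈ J} vⱼ = x`. `P` has degree
at most `n`, and only equipartitions contribute to its coefficient of `X₁ ⋯ Xₙ`, each factor
contributing `-(p-1)! = 1` (Wilson), so this coefficient is the sum in the hypothesis. Hence `P`
has degree exactly `n`, and the Combinatorial Nullstellensatz gives a `0/1` point where `P` does
not vanish.
-/

open Finset MvPolynomial

section Sqfree

variable {ι : Type*}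

noncomputable def sqfree (B : Finset ι) : ι →₀ ℕ := ∑ j ∈ B, Finsupp.single j 1

lemma sqfree_apply [DecidableEq ι] (B : Finset ι) (j : ι) :
    sqfree B j = if j ∈ B then 1 else 0 := by
  simp [sqfree, Finsupp.finsetSum_apply, Finsupp.single_apply]

lemma support_sqfree (B : Finset ι) : (sqfree B).support = B := by
  classical
  ext j
  simp [sqfree_apply]

lemma degree_sqfree (B : Finset ι) : (sqfree B).degree = #B := by
  simp [sqfree]

lemma sqfree_injective : Function.Injective (sqfree (ι := ι)) := fun B B' h => by
  rw [← support_sqfree B, h, support_sqfree]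

lemma sqfree_sub_single [DecidableEq ι] {B : Finset ι} {j : ι} (hj : j ∈ B) :
    sqfree B - Finsupp.single j 1 = sqfree (B.erase j) := by
  rw [sqfree, ← add_sum_erase _ _ hj, add_tsub_cancel_left, sqfree]

lemma sum_sqfree_fiberwise [Fintype ι] {κ : Type*} [Fintype κ] [DecidableEq κ] (f : ι → κ) :
    ∑ i, sqfree {j | f j = i} = sqfree univ :=
  sum_fiberwise univ f _

lemma exists_sqfree_fiberwise_eq [Fintype ι] [DecidableEq ι] {κ : Type*} [Fintype κ]
    [DecidableEq κ] {l : κ → ι →₀ ℕ} (hl : ∑ i, l i = sqfree univ) :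
    ∃ f : ι → κ, ∀ i, l i = sqfree {j | f j = i} := by
  have hunique : ∀ j, ∃ i, ∀ i', l i' j = if i = i' then 1 else 0 := fun j => by
    obtain ⟨i, hi⟩ := (Finsupp.sum_eq_one_iff (Finsupp.equivFunOnFinite.symm (l · j))).1 <| by
      simpa [Finsupp.sum_fintype, sqfree_apply, Finsupp.finsetSum_apply] using congr($hl j)
    exact ⟨i, fun i' => by simpa [Finsupp.single_apply] using congr($hi i')⟩
  choose f hf using hunique
  exact ⟨f, fun i => by ext j; simp [hf, sqfree_apply]⟩

end Sqfree

lemma card_fiber_eq_of_le {ι κ : Type*} [Fintype ι] [Fintype κ] [DecidableEq κ] {m : ℕ}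
    (hcard : Fintype.card ι = Fintype.card κ * m) {f : ι → κ}
    (hf : ∀ i, #{j | f j = i} ≤ m) (i : κ) : #{j | f j = i} = m := by
  refine (sum_eq_sum_iff_of_le fun i _ => hf i).1 ?_ i (mem_univ i)
  rw [← card_eq_sum_card_fiberwise fun j _ => mem_univ (f j), sum_const, card_univ, card_univ,
    hcard, smul_eq_mul]

namespace MvPolynomial

section CommSemiring

variable {ι R : Type*} [CommSemiring R]

lemma coeff_sqfree_X_mul [DecidableEq ι] (Q : MvPolynomial ι R) (B : Finset ι) (j : ι) :
    coeff (sqfree B) (X j * Q) = if j ∈ B then coeff (sqfree (B.erase j)) Q else 0 := by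
  rw [coeff_X_mul', support_sqfree]
  split_ifs with hj
  · rw [sqfree_sub_single hj]
  · rfl

lemma totalDegree_affine_le [Fintype ι] (a : ι → R) (c : R) :
    (∑ j, C (a j) * X j + C c).totalDegree ≤ 1 :=
  (totalDegree_add _ _).trans <| max_le
    (totalDegree_finsetSum_le fun j _ => (isHomogeneous_C_mul_X (a j) j).totalDegree_le)
    (by simp)

theorem coeff_sqfree_affine_pow_card [Fintype ι] [DecidableEq ι] (a : ι → R) (c : R)
    (B : Finset ι) :
    coeff (sqfree B) ((∑ j, C (a j) * X j + C c) ^ #B) = (#B).factorial * ∏ j ∈ B, a j := by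
  set L := ∑ j, C (a j) * X j + C c
  induction h : #B generalizing B with
  | zero => simp [card_eq_zero.1 h, sqfree]
  | succ n ih =>
    have hlow : coeff (sqfree B) (L ^ n) = 0 := by
      refine coeff_eq_zero_of_totalDegree_lt ?_
      rw [← Finsupp.degree_apply, degree_sqfree, h]
      exact (totalDegree_pow L n).trans_lt (by nlinarith [totalDegree_affine_le a c])
    calc coeff (sqfree B) (L ^ (n + 1))
        = ∑ j, a j * coeff (sqfree B) (X j * L ^ n) + c * coeff (sqfree B) (L ^ n) := by
          simp only [L, pow_succ', add_mul, sum_mul, mul_assoc, coeff_add, coeff_sum, coeff_C_mul]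
      _ = ∑ j ∈ B, a j * (n.factorial * ∏ j' ∈ B.erase j, a j') := by
          simp only [hlow, mul_zero, add_zero, coeff_sqfree_X_mul, mul_ite, sum_ite_mem,
            univ_inter]
          exact sum_congr rfl fun j hj => by rw [ih _ (by rw [card_erase_of_mem hj, h]; rfl)]
      _ = (n + 1).factorial * ∏ j ∈ B, a j := by
          rw [sum_congr rfl fun j hj => by rw [mul_left_comm, mul_prod_erase _ _ hj], sum_const, h,
            nsmul_eq_mul, Nat.factorial_succ]
          push_cast
          ring

theorem coeff_sqfree_univ_prod [Fintype ι] [DecidableEq ι] {κ : Type*} [Fintype κ]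
    [DecidableEq κ] (Q : κ → MvPolynomial ι R) :
    coeff (sqfree univ) (∏ i, Q i) = ∑ f : ι → κ, ∏ i, coeff (sqfree {j | f j = i}) (Q i) := by
  rw [← coeff_coe, ← coeToMvPowerSeries.ringHom_apply, map_prod, MvPowerSeries.coeff_prod]
  simp only [coeToMvPowerSeries.ringHom_apply, coeff_coe]
  symm
  refine sum_bij (fun f _ => Finsupp.equivFunOnFinite.symm fun i => sqfree {j | f j = i})
    (fun f _ => by simp [sum_sqfree_fiberwise]) (fun f _ g _ hfg => ?_) (fun l hl => ?_)
    (fun f _ => by simp)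
  · funext j
    have hfib : sqfree {j' | f j' = f j} = sqfree {j' | g j' = f j} := by
      simpa using congr($hfg (f j))
    have hj : j ∈ ({j' | f j' = f j} : Finset ι) := by simp
    rw [sqfree_injective hfib] at hj
    exact ((mem_filter.1 hj).2).symm
  · obtain ⟨f, hf⟩ := exists_sqfree_fiberwise_eq (mem_finsuppAntidiag.1 hl).1
    exact ⟨f, mem_univ f, by ext1 i; simp [hf]⟩

end CommSemiring

section ZModP

variable {p : ℕ} [Fact p.Prime] {ι κ : Type*} [Fintype ι] [Fintype κ]

lemma totalDegree_one_sub_affine_pow_le (a : ι → ZMod p) (c : ZMod p) :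
    (1 - (∑ j, C (a j) * X j + C c) ^ (p - 1)).totalDegree ≤ p - 1 :=
  (totalDegree_sub _ _).trans <| max_le (by simp) <|
    (totalDegree_pow _ _).trans (by nlinarith [totalDegree_affine_le a c])

lemma coeff_sqfree_one_sub_affine_pow [DecidableEq ι] (a : ι → ZMod p) (c : ZMod p)
    {B : Finset ι} (hB : #B = p - 1) :
    coeff (sqfree B) (1 - (∑ j, C (a j) * X j + C c) ^ (p - 1)) = ∏ j ∈ B, a j := by
  have hB0 : sqfree B ≠ 0 := by
    rw [← Finsupp.support_nonempty_iff, support_sqfree, ← card_pos, hB]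
    exact Nat.sub_pos_of_lt (Fact.out : p.Prime).one_lt
  rw [coeff_sub, coeff_one, if_neg hB0.symm, ← hB, coeff_sqfree_affine_pow_card, hB,
    ZMod.wilsons_lemma]
  ring

lemma coeff_sqfree_one_sub_affine_pow_of_lt (a : ι → ZMod p) (c : ZMod p) {B : Finset ι}
    (hB : p - 1 < #B) :
    coeff (sqfree B) (1 - (∑ j, C (a j) * X j + C c) ^ (p - 1)) = 0 :=
  coeff_eq_zero_of_totalDegree_lt <| by
    rw [← Finsupp.degree_apply, degree_sqfree]
    exact (totalDegree_one_sub_affine_pow_le a c).trans_lt hB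

noncomputable def subsetSumPoly (v : ι → κ → ZMod p) (x : κ → ZMod p) :
    MvPolynomial ι (ZMod p) :=
  ∏ i, (1 - (∑ j, C (v j i) * X j + C (-x i)) ^ (p - 1))

lemma totalDegree_subsetSumPoly_le (v : ι → κ → ZMod p) (x : κ → ZMod p) :
    (subsetSumPoly v x).totalDegree ≤ Fintype.card κ * (p - 1) := by
  refine (totalDegree_finsetProd _ _).trans ?_
  simpa using sum_le_sum fun i (_ : i ∈ univ) => totalDegree_one_sub_affine_pow_le (v · i) (-x i)

theorem coeff_sqfree_univ_subsetSumPoly [DecidableEq ι] [DecidableEq κ] (v : ι → κ → ZMod p)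
    (x : κ → ZMod p) (hcard : Fintype.card ι = Fintype.card κ * (p - 1)) :
    coeff (sqfree univ) (subsetSumPoly v x) =
      ∑ f ∈ univ.filter (fun f : ι → κ => ∀ i, #{j | f j = i} = p - 1), ∏ j, v j (f j) := by
  rw [subsetSumPoly, coeff_sqfree_univ_prod, sum_filter]
  refine sum_congr rfl fun f _ => ?_
  split_ifs with hf
  · calc ∏ i, coeff (sqfree {j | f j = i}) (1 - (∑ j, C (v j i) * X j + C (-x i)) ^ (p - 1))
        = ∏ i, ∏ j ∈ {j | f j = i}, v j i :=
          prod_congr rfl fun i _ => coeff_sqfree_one_sub_affine_pow _ _ (hf i)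
      _ = ∏ i, ∏ j ∈ {j | f j = i}, v j (f j) :=
          prod_congr rfl fun i _ => prod_congr rfl fun j hj => by rw [(mem_filter.1 hj).2]
      _ = ∏ j, v j (f j) := prod_fiberwise _ _ _
  · obtain ⟨i, hi⟩ : ∃ i, p - 1 < #{j | f j = i} := by
      by_contra! h
      exact hf (card_fiber_eq_of_le hcard h)
    exact prod_eq_zero (mem_univ i) (coeff_sqfree_one_sub_affine_pow_of_lt _ _ hi)

lemma sum_smul_eq_of_eval_subsetSumPoly_ne_zero {v : ι → κ → ZMod p} {x : κ → ZMod p}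
    {s : ι → ZMod p} (hs : eval s (subsetSumPoly v x) ≠ 0) : ∑ j, s j • v j = x := by
  funext i
  rw [subsetSumPoly, map_prod] at hs
  have hi := prod_ne_zero_iff.1 hs i (mem_univ i)
  simp only [map_sub, map_one, map_pow, map_add, map_sum, map_mul, eval_C, eval_X] at hi
  by_contra hne
  refine hi (sub_eq_zero.2 (ZMod.pow_card_sub_one_eq_one ?_).symm)
  simpa [Finset.sum_apply, mul_comm, ← sub_eq_add_neg, sub_eq_zero] using hne

end ZModP

end MvPolynomial

open MvPolynomial in
theorem sumset_eq_univ_of_coeff_ne_zero_general (p k : ℕ) (hp : p.Prime)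
    (v : Fin (k * (p - 1)) → (Fin k → ZMod p))
    (hcoef : ∑ f ∈ Finset.univ.filter
        (fun f : Fin (k * (p - 1)) → Fin k =>
          ∀ i : Fin k, (Finset.univ.filter (fun j => f j = i)).card = p - 1),
        ∏ j : Fin (k * (p - 1)), v j (f j) ≠ 0) :
    ∀ x : Fin k → ZMod p, ∃ J : Finset (Fin (k * (p - 1))), ∑ j ∈ J, v j = x := by
  have := Fact.mk hp
  intro x
  have hcoeff : coeff (sqfree univ) (subsetSumPoly v x) ≠ 0 := by
    rw [coeff_sqfree_univ_subsetSumPoly v x (by simp)]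
    -- the filter in `hcoef` is decided by `Nat.decidableForallFin`
    convert hcoef
  have hdeg :
      (subsetSumPoly v x).totalDegree = (sqfree (univ : Finset (Fin (k * (p - 1))))).degree :=
    le_antisymm (by simpa [degree_sqfree] using totalDegree_subsetSumPoly_le v x)
      (le_totalDegree (mem_support_iff.2 hcoeff))
  obtain ⟨s, hs, hne⟩ := combinatorial_nullstellensatz_exists_eval_nonzero _ _ hcoeff hdeg
    (fun _ => ({0, 1} : Finset (ZMod p))) fun j => by simp [sqfree_apply, card_pair zero_ne_one]
  refine ⟨univ.filter (s · = 1), ?_⟩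
  rw [← sum_smul_eq_of_eval_subsetSumPoly_ne_zero hne, sum_filter]
  refine sum_congr rfl fun j _ => ?_
  rcases (by simpa using hs j : s j = 0 ∨ s j = 1) with h | h <;> simp [h]

open Finset in
/-- Let `p` be a prime, `k ≥ 1`, and let `v 1, …, v (k(p-1))` be vectors in `ℤ_p^k`.
Suppose that `∑_{(I₁,…,I_k) ∈ 𝓘} ∏_{i ∈ [k]} ∏_{j ∈ I_i} v_j(i) ≠ 0`, where `𝓘` is
the collection of ordered partitions of the index set into `k` parts each of size
`p-1`; equivalently, parametrising such a partition by the map `f` sending each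
index `j` to the part `I_{f j}` containing it, suppose that the sum of
`∏_j v_j (f j)` over all maps `f` whose fibres all have size `p-1` is nonzero.
Then every element of `ℤ_p^k` is the sum of some subset of the `v_j`'s. -/
theorem sumset_eq_univ_of_coeff_ne_zero (p k : ℕ) (hp : p.Prime) (hk : 1 ≤ k)
    (v : Fin (k * (p - 1)) → (Fin k → ZMod p))
    (hcoef : ∑ f ∈ Finset.univ.filter
        (fun f : Fin (k * (p - 1)) → Fin k =>
          ∀ i : Fin k, (Finset.univ.filter (fun j => f j = i)).card = p - 1),
        ∏ j : Fin (k * (p - 1)), v j (f j) ≠ 0) :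
    ∀ x : Fin k → ZMod p, ∃ J : Finset (Fin (k * (p - 1))), ∑ j ∈ J, v j = x :=
  sumset_eq_univ_of_coeff_ne_zero_general p k hp v hcoef
end
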